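/- Let λ ∈ ℝᵏ and let g be an ℝᵏ-valued random vector with independent standard Gumbel coordinates. For temperature T > 0, define the Gumbel-softmax random variable κ̃_T = softmax((λ + g)/T), taking values in the probability simplex in ℝᵏ. Then as T → 0⁺, κ̃_T converges in distribution to the random one-hot vector e_{argmax_i(λ_i + g_i)}, whose index is a categorical random variable with category probabilities softmax(λ); that is, the Gumbel-softmax distribution with parameters λ and T converges weakly, as T → 0, to the categorical distribution with probabilities softmax(λ) supported on the vertices of the simplex. -/

import Mathlib

open MeasureTheory ProbabilityTheory Filter
open scoped NNReal ENNReal BigOperators Topology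

/-- The standard Gumbel distribution on `ℝ`, with cumulative distribution function
`F(x) = exp(−exp(−x))`, given here by its density `exp(−x − exp(−x))` with respect to Lebesgue
measure. -/
noncomputable def stdGumbel : Measure ℝ :=
  MeasureTheory.volume.withDensity fun x => ENNReal.ofReal (Real.exp (-x - Real.exp (-x)))

/-- The softmax of `v ∈ ℝᵏ`: the probability vector with `j`-th entry
`exp(v j) / ∑ i, exp(v i)`. -/
noncomputable def softmax {k : ℕ} (v : Fin k → ℝ) : Fin k → ℝ :=
  fun j => Real.exp (v j) / ∑ i, Real.exp (v i)

/-- The `j`-th vertex of the probability simplex in `ℝᵏ` (the `j`-th standard basis vector). -/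
def onehot {k : ℕ} (j : Fin k) : Fin k → ℝ :=
  fun i => if i = j then 1 else 0

/-!
Write `Y = lam + g`. Almost surely the coordinates of `Y` are distinct, so `Y` has a unique
maximiser `J`, and as `T → 0⁺` the vector `softmax (Y / T)` tends to the vertex `onehot J`;
dominated convergence then gives `E[f (softmax (Y / T))] → ∑ j, P(J = j) f (onehot j)`.
The Gumbel-max trick identifies `P(J = j)`: conditionally on `g j = t`, the event `J = j` asks
`g i < lam j - lam i + t` for all `i ≠ j`, which has probability `exp (-c e^{-t})` with
`c = ∑_{i ≠ j} exp (lam i - lam j)`; integrating against the Gumbel density gives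
`∫ exp (-t - (1 + c) e^{-t}) dt = (1 + c)⁻¹ = softmax lam j`.
-/

open Set Real

lemma integrable_of_hasDerivAt_of_nonneg {f f' : ℝ → ℝ} {m n : ℝ}
    (hderiv : ∀ x, HasDerivAt f (f' x) x) (hf' : Continuous f') (hnonneg : ∀ x, 0 ≤ f' x)
    (hbot : Tendsto f atBot (𝓝 m)) (htop : Tendsto f atTop (𝓝 n)) : Integrable f' := by
  refine integrable_of_intervalIntegral_norm_tendsto (n - m) (fun _ => hf'.integrableOn_Ioc)
    tendsto_neg_atTop_atBot tendsto_id ?_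
  have hftc : ∀ x : ℝ, ∫ t in -x..x, ‖f' t‖ = f x - f (-x) := fun x => by
    have hnorm : ∀ t, ‖f' t‖ = f' t := fun t => Real.norm_of_nonneg (hnonneg t)
    simp only [hnorm]
    exact intervalIntegral.integral_eq_sub_of_hasDerivAt (fun t _ => hderiv t)
      (hf'.intervalIntegrable _ _)
  exact (htop.sub (hbot.comp tendsto_neg_atTop_atBot)).congr fun x => (hftc x).symm

section GumbelIntegral

variable {S : ℝ}

lemma hasDerivAt_inv_mul_exp_neg_mul_exp_neg (hS : S ≠ 0) (t : ℝ) :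
    HasDerivAt (fun t => S⁻¹ * exp (-(S * exp (-t)))) (exp (-t - S * exp (-t))) t := by
  have h := ((((hasDerivAt_neg t).exp.const_mul S).neg).exp).const_mul S⁻¹
  refine h.congr_deriv ?_
  rw [sub_eq_neg_add, exp_add]
  field_simp
  rfl

lemma tendsto_inv_mul_exp_neg_mul_exp_neg_atTop (S : ℝ) :
    Tendsto (fun t => S⁻¹ * exp (-(S * exp (-t)))) atTop (𝓝 S⁻¹) := by
  have h : Tendsto (fun t => -(S * exp (-t))) atTop (𝓝 0) := by
    simpa using ((tendsto_exp_atBot.comp tendsto_neg_atTop_atBot).const_mul S).neg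
  simpa using ((continuous_exp.tendsto 0).comp h).const_mul S⁻¹

lemma tendsto_inv_mul_exp_neg_mul_exp_neg_atBot (hS : 0 < S) :
    Tendsto (fun t => S⁻¹ * exp (-(S * exp (-t)))) atBot (𝓝 0) := by
  have h : Tendsto (fun t => -(S * exp (-t))) atBot atBot :=
    tendsto_neg_atTop_atBot.comp <|
      (tendsto_exp_atTop.comp tendsto_neg_atBot_atTop).const_mul_atTop hS
  simpa using (tendsto_exp_atBot.comp h).const_mul S⁻¹

lemma integrable_exp_neg_sub_mul_exp_neg (hS : 0 < S) :
    Integrable fun t => exp (-t - S * exp (-t)) :=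
  integrable_of_hasDerivAt_of_nonneg (hasDerivAt_inv_mul_exp_neg_mul_exp_neg hS.ne')
    (by fun_prop) (fun _ => (exp_pos _).le) (tendsto_inv_mul_exp_neg_mul_exp_neg_atBot hS)
    (tendsto_inv_mul_exp_neg_mul_exp_neg_atTop S)

lemma integral_exp_neg_sub_mul_exp_neg (hS : 0 < S) :
    ∫ t, exp (-t - S * exp (-t)) = S⁻¹ := by
  simpa using integral_of_hasDerivAt_of_tendsto (hasDerivAt_inv_mul_exp_neg_mul_exp_neg hS.ne')
    (integrable_exp_neg_sub_mul_exp_neg hS) (tendsto_inv_mul_exp_neg_mul_exp_neg_atBot hS)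
    (tendsto_inv_mul_exp_neg_mul_exp_neg_atTop S)

lemma integral_Iio_exp_neg_sub_mul_exp_neg (hS : 0 < S) (a : ℝ) :
    ∫ t in Iio a, exp (-t - S * exp (-t)) = S⁻¹ * exp (-(S * exp (-a))) := by
  rw [← integral_Iic_eq_integral_Iio]
  simpa using integral_Iic_of_hasDerivAt_of_tendsto'
    (fun t _ => hasDerivAt_inv_mul_exp_neg_mul_exp_neg hS.ne' t)
    (integrable_exp_neg_sub_mul_exp_neg hS).integrableOn
    (tendsto_inv_mul_exp_neg_mul_exp_neg_atBot hS)

end GumbelIntegral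

lemma lintegral_exp_neg_mul_exp_neg_stdGumbel {c : ℝ} (hc : 0 ≤ c) :
    ∫⁻ t, ENNReal.ofReal (exp (-(c * exp (-t)))) ∂stdGumbel
      = ENNReal.ofReal (1 + c)⁻¹ := by
  have hS : 0 < 1 + c := by linarith
  have hmul : ∀ t, ENNReal.ofReal (exp (-t - exp (-t))) * ENNReal.ofReal (exp (-(c * exp (-t))))
      = ENNReal.ofReal (exp (-t - (1 + c) * exp (-t))) := fun t => by
    rw [← ENNReal.ofReal_mul (exp_pos _).le, ← exp_add]
    ring_nf
  rw [stdGumbel, lintegral_withDensity_eq_lintegral_mul _ (by fun_prop) (by fun_prop)]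
  simp only [Pi.mul_apply, hmul]
  rw [← ofReal_integral_eq_lintegral_ofReal (integrable_exp_neg_sub_mul_exp_neg hS)
    (Eventually.of_forall fun _ => (exp_pos _).le), integral_exp_neg_sub_mul_exp_neg hS]

instance isProbabilityMeasure_stdGumbel : IsProbabilityMeasure stdGumbel :=
  ⟨by simpa using lintegral_exp_neg_mul_exp_neg_stdGumbel le_rfl⟩

instance nullSingletonClass_stdGumbel : NullSingletonClass stdGumbel := by
  unfold stdGumbel
  infer_instance

lemma stdGumbel_Iio (a : ℝ) : stdGumbel (Iio a) = ENNReal.ofReal (exp (-exp (-a))) := by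
  have h := integral_Iio_exp_neg_sub_mul_exp_neg one_pos a
  simp only [one_mul, inv_one] at h
  rw [stdGumbel, withDensity_apply _ measurableSet_Iio, ← h, ofReal_integral_eq_lintegral_ofReal]
  · simpa [IntegrableOn] using (integrable_exp_neg_sub_mul_exp_neg one_pos).integrableOn
  · exact Eventually.of_forall fun _ => (exp_pos _).le

lemma softmax_eq_inv_one_add_sum_succAbove {n : ℕ} (lam : Fin (n + 1) → ℝ) (j : Fin (n + 1)) :
    softmax lam j = (1 + ∑ i, exp (lam (j.succAbove i) - lam j))⁻¹ := by
  rw [softmax, Fin.sum_univ_succAbove _ j]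
  simp only [exp_sub, ← Finset.sum_div]
  field_simp

lemma measurable_softmax {k : ℕ} : Measurable (softmax (k := k)) := by
  unfold softmax
  fun_prop

lemma softmax_sub_const {k : ℕ} (v : Fin k → ℝ) (c : ℝ) :
    softmax (fun i => v i - c) = softmax v := by
  ext j
  simp only [softmax, exp_sub, ← Finset.sum_div]
  exact div_div_div_cancel_right₀ (exp_ne_zero c) _ _

lemma tendsto_softmax_div_nhdsGT_zero {k : ℕ} {y : Fin k → ℝ} {j : Fin k}
    (hmax : ∀ i ≠ j, y i < y j) :
    Tendsto (fun T => softmax fun i => y i / T) (𝓝[>] 0) (𝓝 (onehot j)) := by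
  have hexp : ∀ i, Tendsto (fun T => exp ((y i - y j) / T)) (𝓝[>] 0) (𝓝 (onehot j i)) := by
    intro i
    rcases eq_or_ne i j with rfl | hi
    · simp [onehot]
    · simp only [onehot, if_neg hi, div_eq_mul_inv]
      exact tendsto_exp_atBot.comp
        (tendsto_inv_nhdsGT_zero.const_mul_atTop_of_neg (sub_neg.2 (hmax i hi)))
  have hsum : Tendsto (fun T => ∑ i, exp ((y i - y j) / T)) (𝓝[>] 0) (𝓝 1) := by
    simpa [onehot] using tendsto_finsetSum Finset.univ fun i _ => hexp i
  have hshift : ∀ T, (softmax fun i => y i / T) = softmax fun i => (y i - y j) / T := fun T => by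
    simp only [sub_div, softmax_sub_const]
  simp only [hshift]
  refine tendsto_pi_nhds.2 fun i => ?_
  rw [← div_one (onehot j i)]
  exact (hexp i).div hsum one_ne_zero

theorem measure_pi_stdGumbel_argmax_add {k : ℕ} (lam : Fin k → ℝ) (j : Fin k) :
    Measure.pi (fun _ => stdGumbel) {x | ∀ i ≠ j, lam i + x i < lam j + x j}
      = ENNReal.ofReal (softmax lam j) := by
  obtain ⟨n, rfl⟩ := Nat.exists_eq_add_one_of_ne_zero j.pos.ne'
  set B : Set (ℝ × (Fin n → ℝ)) :=
    {p | p.2 ∈ univ.pi fun i => Iio (lam j + p.1 - lam (j.succAbove i))}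
  have hB : MeasurableSet B := by
    simp only [B, mem_univ_pi, mem_Iio, ofPred_forall]
    exact .iInter fun i => measurableSet_lt (by fun_prop) (by fun_prop)
  have hset : {x : Fin (n + 1) → ℝ | ∀ i ≠ j, lam i + x i < lam j + x j}
      = MeasurableEquiv.piFinSuccAbove (fun _ => ℝ) j ⁻¹' B := by
    ext x
    simp [B, Fin.forall_iff_succAbove j, Fin.removeNth, lt_sub_iff_add_lt']
  set c := ∑ i, exp (lam (j.succAbove i) - lam j)
  have hsection : ∀ t, Measure.pi (fun _ => stdGumbel) (Prod.mk t ⁻¹' B)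
      = ENNReal.ofReal (exp (-(c * exp (-t)))) := fun t => by
    rw [show Prod.mk t ⁻¹' B = univ.pi fun i => Iio (lam j + t - lam (j.succAbove i)) from rfl,
      Measure.pi_pi]
    simp only [stdGumbel_Iio]
    rw [← ENNReal.ofReal_prod_of_nonneg fun _ _ => (exp_pos _).le, ← exp_sum]
    congr 2
    rw [Finset.sum_mul, ← Finset.sum_neg_distrib]
    refine Finset.sum_congr rfl fun i _ => ?_
    rw [← exp_add]
    ring_nf
  rw [hset, (measurePreserving_piFinSuccAbove _ j).measure_preimage hB.nullMeasurableSet,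
    Measure.prod_apply hB]
  simp only [hsection]
  rw [lintegral_exp_neg_mul_exp_neg_stdGumbel (by positivity),
    softmax_eq_inv_one_add_sum_succAbove]

lemma ProbabilityTheory.IndepFun.measure_eq_eq_zero {Ω : Type*} [MeasurableSpace Ω]
    {μ : Measure Ω} [IsFiniteMeasure μ] {X Y : Ω → ℝ} (hXY : IndepFun X Y μ)
    (hX : Measurable X) (hY : Measurable Y) [NullSingletonClass (μ.map X)] :
    μ {ω | X ω = Y ω} = 0 := by
  have hD : MeasurableSet {p : ℝ × ℝ | p.1 = p.2} :=
    measurableSet_eq_fun measurable_fst measurable_snd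
  rw [show {ω | X ω = Y ω} = (fun ω => (X ω, Y ω)) ⁻¹' {p | p.1 = p.2} from rfl,
    ← Measure.map_apply (hX.prodMk hY) hD, (indepFun_iff_map_prod_eq_prod_map_map
      hX.aemeasurable hY.aemeasurable).1 hXY, Measure.prod_apply_symm hD]
  simp

theorem tendsto_integral_comp_softmax_div {k : ℕ} [NeZero k] {Ω : Type*} [MeasurableSpace Ω]
    {μ : Measure Ω} [IsFiniteMeasure μ] {Y : Ω → Fin k → ℝ} (hY : Measurable Y)
    (hinj : ∀ᵐ ω ∂μ, Function.Injective (Y ω))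
    (f : BoundedContinuousFunction (Fin k → ℝ) ℝ) :
    Tendsto (fun T => ∫ ω, f (softmax fun i => Y ω i / T) ∂μ) (𝓝[>] 0)
      (𝓝 (∑ j, μ.real {ω | ∀ i ≠ j, Y ω i < Y ω j} * f (onehot j))) := by
  set A : Fin k → Set Ω := fun j => {ω | ∀ i ≠ j, Y ω i < Y ω j}
  have hA : ∀ j, MeasurableSet (A j) := fun j => by
    simp only [A, ofPred_forall]
    exact .iInter fun i => .iInter fun _ =>
      measurableSet_lt (by fun_prop) (by fun_prop)
  have hlimit : ∫ ω, ∑ j, (A j).indicator (fun _ => f (onehot j)) ω ∂μ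
      = ∑ j, μ.real (A j) * f (onehot j) := by
    rw [integral_finsetSum _ fun j _ => (integrable_const _).indicator (hA j)]
    simp only [integral_indicator_const _ (hA _), smul_eq_mul]
  rw [← hlimit]
  refine tendsto_integral_filter_of_dominated_convergence (fun _ => ‖f‖)
    (Eventually.of_forall fun T => (f.continuous.measurable.comp
      (measurable_softmax.comp (by fun_prop))).aestronglyMeasurable)
    (Eventually.of_forall fun T => Eventually.of_forall fun ω => f.norm_coe_le_norm _)
    (integrable_const _) ?_
  filter_upwards [hinj] with ω hω
  obtain ⟨j, hj⟩ := Finite.exists_max (Y ω)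
  have hmax : ∀ i ≠ j, Y ω i < Y ω j := fun i hi => (hj i).lt_of_ne (hω.ne hi)
  have hnotMem : ∀ i ≠ j, ω ∉ A i := fun i hi hωi => (hmax i hi).asymm (hωi j hi.symm)
  rw [Finset.sum_eq_single j (fun i _ hi => indicator_of_notMem (hnotMem i hi) _)
    (by simp), indicator_of_mem (show ω ∈ A j from hmax)]
  exact (f.continuous.tendsto _).comp (tendsto_softmax_div_nhdsGT_zero hmax)

section GumbelVector

variable {k : ℕ} {Ω : Type*} [MeasurableSpace Ω] {μ : Measure Ω} {g : Fin k → Ω → ℝ}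

lemma ae_injective_add_of_iIndepFun_stdGumbel [IsFiniteMeasure μ]
    (hmeas : ∀ i, Measurable (g i)) (hindep : iIndepFun g μ)
    (hlaw : ∀ i, μ.map (g i) = stdGumbel) (lam : Fin k → ℝ) :
    ∀ᵐ ω ∂μ, Function.Injective fun i => lam i + g i ω := by
  have hties : ∀ i j, ∀ᵐ ω ∂μ, i ≠ j → lam i + g i ω ≠ lam j + g j ω := by
    intro i j
    rcases eq_or_ne i j with rfl | hij
    · exact ae_of_all _ fun _ h => absurd rfl h
    have : NullSingletonClass (μ.map (g i)) := hlaw i ▸ inferInstance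
    have hshift : Measurable fun x : ℝ => lam j + x - lam i := by fun_prop
    have hindep' := (hindep.indepFun hij).comp measurable_id hshift
    rw [Function.id_comp] at hindep'
    have hnull := hindep'.measure_eq_eq_zero (hmeas i) (hshift.comp (hmeas j))
    filter_upwards [measure_eq_zero_iff_ae_notMem.1 hnull] with ω hω _ heq
    exact hω (by simp only [Function.comp_apply]; linarith)
  filter_upwards [ae_all_iff.2 fun i => ae_all_iff.2 (hties i)] with ω hω i j heq
  by_contra hij
  exact hω i j hij heq

lemma measureReal_argmax_add_of_iIndepFun_stdGumbel [IsProbabilityMeasure μ]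
    (hmeas : ∀ i, Measurable (g i)) (hindep : iIndepFun g μ)
    (hlaw : ∀ i, μ.map (g i) = stdGumbel) (lam : Fin k → ℝ) (j : Fin k) :
    μ.real {ω | ∀ i ≠ j, lam i + g i ω < lam j + g j ω} = softmax lam j := by
  have hmap : μ.map (fun ω i => g i ω) = Measure.pi fun _ => stdGumbel := by
    rw [(iIndepFun_iff_map_fun_eq_pi_map fun i => (hmeas i).aemeasurable).1 hindep]
    simp only [hlaw]
  have hset : MeasurableSet {x : Fin k → ℝ | ∀ i ≠ j, lam i + x i < lam j + x j} := by
    simp only [ofPred_forall]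
    exact .iInter fun i => .iInter fun _ => measurableSet_lt (by fun_prop) (by fun_prop)
  rw [measureReal_def, show {ω | ∀ i ≠ j, lam i + g i ω < lam j + g j ω}
      = (fun ω i => g i ω) ⁻¹' {x | ∀ i ≠ j, lam i + x i < lam j + x j} from rfl,
    ← Measure.map_apply (measurable_pi_lambda _ hmeas) hset, hmap,
    measure_pi_stdGumbel_argmax_add, ENNReal.toReal_ofReal (by unfold softmax; positivity)]

end GumbelVector

/-- Convergence of the Gumbel-softmax distribution to the categorical distribution: if
`g = (g 1, …, g k)` has independent standard Gumbel coordinates and `lam ∈ ℝᵏ`, then the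
Gumbel-softmax random variable `κ̃_T = softmax ((lam + g)/T)` converges in distribution, as the
temperature `T → 0⁺`, to the random one-hot vector whose index is categorical with probabilities
`softmax lam`; i.e., for every bounded continuous function `f` on `ℝᵏ`, the expectation
`E[f (κ̃_T)]` tends to `∑ j, softmax lam j * f (e j)`, the expectation of `f` under the
categorical distribution with probabilities `softmax lam` supported on the vertices of the
simplex. -/
theorem gumbel_softmax_tendsto_categorical
    {k : ℕ} (hk : 0 < k)
    {Ω : Type*} [MeasureSpace Ω] [IsProbabilityMeasure (ℙ : Measure Ω)]
    (lam : Fin k → ℝ) (g : Fin k → Ω → ℝ)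
    (hmeas : ∀ i, Measurable (g i))
    (hindep : iIndepFun g ℙ)
    (hlaw : ∀ i, Measure.map (g i) ℙ = stdGumbel) :
    ∀ f : BoundedContinuousFunction (Fin k → ℝ) ℝ,
      Tendsto
        (fun T : ℝ => ∫ ω, f (softmax fun i => (lam i + g i ω) / T) ∂ℙ)
        (𝓝[>] 0)
        (𝓝 (∑ j, softmax lam j * f (onehot j))) := by
  intro f
  have : NeZero k := ⟨hk.ne'⟩
  have hY : Measurable fun ω i => lam i + g i ω :=
    measurable_pi_lambda _ fun i => (hmeas i).const_add (lam i)
  have h := tendsto_integral_comp_softmax_div hY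
    (ae_injective_add_of_iIndepFun_stdGumbel hmeas hindep hlaw lam) f
  simpa only [measureReal_argmax_add_of_iIndepFun_stdGumbel hmeas hindep hlaw lam] using h
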